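/- Let G be a finite connected bipartite simple graph, and let k be even. The average k-level friendship bias for the simple random walk equals zero if and only if G is bi-regular, i.e., all vertices on the same side of the bipartition have the same degree. -/

import Mathlib

/-!
Write `d` for the degree function and `P` for the random-walk matrix. The walk is reversible,
`d i * (P ^ k) i j = d j * (P ^ k) j i`, and `P ^ k` has unit row sums, so symmetrising turns twice
the total bias into `∑ i, ∑ j, (P ^ k) i j * (d j - d i) ^ 2 / d j`, a sum of nonnegative terms.
Hence the bias vanishes iff `d i = d j` whenever a walk of length `k` joins `i` and `j`. For even
`k > 0` this says that `d` agrees at the ends of every path `u - x - v` (pad it by backtracking),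
and in a connected bipartite graph two vertices lie on the same side iff they are joined by an
even walk, i.e. by a chain of such paths.
-/

open Finset
open scoped Matrix

namespace Matrix

variable {ι R : Type*} [Fintype ι]

theorem pow_apply_eq_zero_iff_of_nonneg [DecidableEq ι] [Semiring R] [PartialOrder R]
    [IsOrderedRing R] [NoZeroDivisors R] {M N : Matrix ι ι R} (hM : ∀ i j, 0 ≤ M i j)
    (hN : ∀ i j, 0 ≤ N i j) (hMN : ∀ i j, M i j = 0 ↔ N i j = 0) (k : ℕ) (i j : ι) :
    (M ^ k) i j = 0 ↔ (N ^ k) i j = 0 := by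
  induction k generalizing i with
  | zero => simp [one_apply]
  | succ k ih =>
    simp only [pow_succ', mul_apply]
    rw [sum_eq_zero_iff_of_nonneg fun l _ => mul_nonneg (hM i l) (pow_apply_nonneg hM k l j),
      sum_eq_zero_iff_of_nonneg fun l _ => mul_nonneg (hN i l) (pow_apply_nonneg hN k l j)]
    simp only [mul_eq_zero, hMN, ih]

theorem two_mul_sum_sum_mul_sub_eq (Q : Matrix ι ι ℝ) (d : ι → ℝ)
    (hQ : ∀ i, ∑ j, Q i j = 1) (hrev : ∀ i j, d i * Q i j = d j * Q j i)
    (hd : ∀ i, d i ≠ 0) :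
    2 * ∑ i, (∑ j, Q i j * d j - d i) = ∑ i, ∑ j, Q i j * (d j - d i) ^ 2 / d j := by
  have hS : ∑ i, (∑ j, Q i j * d j - d i) = ∑ i, ∑ j, Q i j * (d j - d i) := by
    refine sum_congr rfl fun i _ => ?_
    simp only [mul_sub, sum_sub_distrib, ← sum_mul, hQ, one_mul]
  have hswap : ∑ i, ∑ j, Q i j * (d j - d i) = ∑ i, ∑ j, Q j i * (d i - d j) := sum_comm
  rw [two_mul, hS]
  nth_rewrite 2 [hswap]
  simp only [← sum_add_distrib]
  refine sum_congr rfl fun i _ => sum_congr rfl fun j _ => ?_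
  rw [eq_div_iff (hd j)]
  linear_combination (d j - d i) * hrev i j

theorem sum_sum_mul_sub_eq_zero_iff [DecidableEq ι] {Q : Matrix ι ι ℝ} {d : ι → ℝ}
    (hQ : Q ∈ rowStochastic ℝ ι) (hrev : ∀ i j, d i * Q i j = d j * Q j i)
    (hd : ∀ i, 0 < d i) :
    ∑ i, (∑ j, Q i j * d j - d i) = 0 ↔ ∀ i j, Q i j ≠ 0 → d i = d j := by
  have hterm : ∀ i j, 0 ≤ Q i j * (d j - d i) ^ 2 / d j := fun i j =>
    div_nonneg (mul_nonneg (nonneg_of_mem_rowStochastic hQ) (sq_nonneg _)) (hd j).le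
  rw [← mul_eq_zero_iff_left (two_ne_zero' ℝ),
    two_mul_sum_sum_mul_sub_eq Q d (sum_row_of_mem_rowStochastic hQ) hrev fun i => (hd i).ne',
    sum_eq_zero_iff_of_nonneg fun i _ => sum_nonneg fun j _ => hterm i j]
  simp only [mem_univ, forall_const, sum_eq_zero_iff_of_nonneg fun j _ => hterm _ j]
  refine forall₂_congr fun i j => ?_
  rw [div_eq_zero_iff, or_iff_left (hd j).ne', mul_eq_zero, sq_eq_zero_iff, sub_eq_zero,
    or_iff_not_imp_left, eq_comm (a := d j)]

end Matrix

namespace SimpleGraph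

variable {V α : Type*} {G : SimpleGraph V}

theorem Walk.apply_eq_of_even_length {f : V → α}
    (hf : ∀ {u x v}, G.Adj u x → G.Adj x v → f u = f v) :
    ∀ {u v : V} (p : G.Walk u v), Even p.length → f u = f v
  | _, _, .nil, _ => rfl
  | _, _, .cons _ .nil, hp => by simp at hp
  | _, _, .cons h (.cons h' q), hp =>
    (hf h h').trans (apply_eq_of_even_length hf q (by simpa [parity_simps] using hp))

theorem Adj.exists_walk_length_eq_two_mul_add_two {u x v : V} (h : G.Adj u x)
    (h' : G.Adj x v) : ∀ m : ℕ, ∃ p : G.Walk u v, p.length = 2 * m + 2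
  | 0 => ⟨.cons h (.cons h' .nil), rfl⟩
  | m + 1 => by
    obtain ⟨p, hp⟩ := h.exists_walk_length_eq_two_mul_add_two h' m
    exact ⟨.cons h (.cons h.symm p), by simp [hp]; ring⟩

theorem Connected.forall_walk_length_apply_eq_iff (hG : G.Connected) (c : G.Coloring Bool)
    {f : V → α} {k : ℕ} (hk : Even k) (hk0 : k ≠ 0) :
    (∀ u v (p : G.Walk u v), p.length = k → f u = f v) ↔
      ∀ u v, c u = c v → f u = f v := by
  constructor
  · intro hf u v hc
    obtain ⟨p⟩ := hG.preconnected u v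
    refine p.apply_eq_of_even_length (fun {a x b} h h' => ?_) ((c.even_length_iff_congr p).2 ?_)
    · obtain ⟨m, rfl⟩ : ∃ m, k = 2 * m + 2 := by
        obtain ⟨t, rfl⟩ := hk
        exact ⟨t - 1, by omega⟩
      obtain ⟨q, hq⟩ := h.exists_walk_length_eq_two_mul_add_two h' m
      exact hf a b q hq
    · rw [hc]
  · rintro hf u v p rfl
    exact hf u v (Bool.eq_iff_iff.2 ((c.even_length_iff_congr p).1 hk))

section RandomWalk

variable [Fintype V] (G : SimpleGraph V) [DecidableRel G.Adj]

noncomputable def randomWalkMatrix : Matrix V V ℝ :=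
  Matrix.of fun u v => G.adjMatrix ℝ u v / G.degree u

variable {G}

theorem randomWalkMatrix_apply (u v : V) :
    G.randomWalkMatrix u v = G.adjMatrix ℝ u v / G.degree u := rfl

theorem randomWalkMatrix_apply_nonneg (u v : V) : 0 ≤ G.randomWalkMatrix u v := by
  rw [randomWalkMatrix_apply]
  by_cases h : G.Adj u v <;> simp [h]

theorem randomWalkMatrix_apply_eq_zero_iff (u v : V) :
    G.randomWalkMatrix u v = 0 ↔ G.adjMatrix ℝ u v = 0 := by
  rw [randomWalkMatrix_apply, div_eq_zero_iff, or_iff_left_iff_imp, Nat.cast_eq_zero,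
    degree_eq_zero_iff_notMem_support]
  intro hu
  simpa [adjMatrix_apply] using fun h => hu ⟨v, h⟩

theorem degree_mul_randomWalkMatrix_apply (u v : V) :
    G.degree u * G.randomWalkMatrix u v = G.adjMatrix ℝ u v := by
  rw [mul_comm, randomWalkMatrix_apply]
  refine div_mul_cancel_of_imp fun hu => (randomWalkMatrix_apply_eq_zero_iff u v).1 ?_
  simp [randomWalkMatrix_apply, hu]

variable [DecidableEq V]

theorem randomWalkMatrix_mem_rowStochastic (hG : ∀ v, G.degree v ≠ 0) :
    G.randomWalkMatrix ∈ Matrix.rowStochastic ℝ V := by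
  refine Matrix.mem_rowStochastic_iff_sum.2 ⟨randomWalkMatrix_apply_nonneg, fun u => ?_⟩
  have hrow : ∑ v, G.adjMatrix ℝ u v = G.degree u := by
    simpa [Matrix.mulVec, dotProduct] using
      G.adjMatrix_mulVec_const_apply (a := (1 : ℝ)) (v := u)
  simp only [randomWalkMatrix_apply, ← Finset.sum_div, hrow]
  exact div_self (Nat.cast_ne_zero.2 (hG u))

theorem degree_mul_randomWalkMatrix_pow_apply (k : ℕ) (u v : V) :
    G.degree u * (G.randomWalkMatrix ^ k) u v = G.degree v * (G.randomWalkMatrix ^ k) v u := by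
  set D := Matrix.diagonal fun v => (G.degree v : ℝ)
  have hDP : D * G.randomWalkMatrix = G.adjMatrix ℝ := by
    ext u v
    simp [D, Matrix.diagonal_mul, degree_mul_randomWalkMatrix_apply]
  have hsemiconj : SemiconjBy D G.randomWalkMatrix G.randomWalkMatrixᵀ := by
    rw [SemiconjBy, hDP, ← G.transpose_adjMatrix, ← hDP, Matrix.transpose_mul,
      Matrix.diagonal_transpose]
  simpa [D, ← Matrix.transpose_pow, mul_comm] using congrFun₂ (hsemiconj.pow_right k) u v

theorem randomWalkMatrix_pow_apply_ne_zero_iff (k : ℕ) (u v : V) :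
    (G.randomWalkMatrix ^ k) u v ≠ 0 ↔ ∃ p : G.Walk u v, p.length = k := by
  rw [Ne, Matrix.pow_apply_eq_zero_iff_of_nonneg randomWalkMatrix_apply_nonneg
    (fun u v => by by_cases h : G.Adj u v <;> simp [h]) randomWalkMatrix_apply_eq_zero_iff,
    adjMatrix_pow_apply_eq_card_walk, Nat.cast_eq_zero, Fintype.card_eq_zero_iff,
    not_isEmpty_iff]
  exact nonempty_subtype

end RandomWalk

end SimpleGraph

theorem stmt_6 (n : ℕ) (G : SimpleGraph (Fin n)) [DecidableRel G.Adj]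
    (hconn : G.Connected) (hdeg : ∀ i, 1 ≤ G.degree i)
    (side : Fin n → Bool) (hbip : ∀ i j, G.Adj i j → side i ≠ side j)
    (k : ℕ) (hk : Even k) (hk1 : 1 ≤ k)
    (P : Matrix (Fin n) (Fin n) ℝ)
    (hP : ∀ i j, P i j = (G.adjMatrix ℝ) i j / (G.degree i : ℝ)) :
    (1 / (n : ℝ)) * ∑ i, ((∑ j, (P ^ k) i j * (G.degree j : ℝ)) - (G.degree i : ℝ)) = 0
      ↔ ∀ i j, side i = side j → G.degree i = G.degree j := by
  obtain rfl : P = G.randomWalkMatrix := Matrix.ext hP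
  have hn : 1 / (n : ℝ) ≠ 0 :=
    one_div_ne_zero (Nat.cast_ne_zero.2 (Fin.pos_iff_nonempty.2 hconn.nonempty).ne')
  have hstoch : G.randomWalkMatrix ^ k ∈ Matrix.rowStochastic ℝ (Fin n) :=
    Submonoid.pow_mem _
      (G.randomWalkMatrix_mem_rowStochastic (Nat.one_le_iff_ne_zero.1 <| hdeg ·)) k
  rw [mul_eq_zero, or_iff_right hn, Matrix.sum_sum_mul_sub_eq_zero_iff hstoch
    (SimpleGraph.degree_mul_randomWalkMatrix_pow_apply k) (Nat.cast_pos.2 <| hdeg ·)]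
  simp only [SimpleGraph.randomWalkMatrix_pow_apply_ne_zero_iff, Nat.cast_inj,
    forall_exists_index]
  exact hconn.forall_walk_length_apply_eq_iff (.mk side (hbip _ _ ·)) hk (by omega)
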